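/- arXiv:1609.05784 — 2 statements merged into one kernel-verified Lean document; each statement's English description precedes it below -/
import Mathlib

section
/- Let α ∈ R be irrational, and let X ⊂ T = R/Z be a set such that a finite union of translates of X contains {π(nα) : n ∈ N} (where π : R → T is the canonical projection). Then the closure of X in T has non-empty interior. -/
/-!
The orbit `{n α}` of an irrational rotation is dense in the circle. If finitely many translates of
`X` cover it, then, since a dense set is not a finite union of nowhere dense sets, some translate
of `X`, hence `X` itself, is not nowhere dense.
-/

open Set

section NowhereDense

variable {X : Type*} [TopologicalSpace X]

lemma IsNowhereDense.union {s t : Set X} (hs : IsNowhereDense s) (ht : IsNowhereDense t) :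
    IsNowhereDense (s ∪ t) := by
  rw [IsNowhereDense, closure_union, interior_union_isClosed_of_interior_empty isClosed_closure ht]
  exact hs

lemma Set.Finite.isNowhereDense_biUnion {ι : Type*} {s : Set ι} (hs : s.Finite) {f : ι → Set X}
    (hf : ∀ i ∈ s, IsNowhereDense (f i)) : IsNowhereDense (⋃ i ∈ s, f i) := by
  induction s, hs using Set.Finite.induction_on with
  | empty => simp [isNowhereDense_empty]
  | @insert a s _ _ ih =>
    rw [biUnion_insert]
    exact (hf a (mem_insert a s)).union (ih fun i hi => hf i (mem_insert_of_mem a hi))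

lemma Dense.not_isNowhereDense [Nonempty X] {D : Set X} (hD : Dense D) : ¬IsNowhereDense D := by
  simp [IsNowhereDense, hD.closure_eq]

lemma Dense.exists_not_isNowhereDense_of_subset_biUnion [Nonempty X] {D : Set X} (hD : Dense D)
    {ι : Type*} {s : Set ι} (hs : s.Finite) {f : ι → Set X} (hcover : D ⊆ ⋃ i ∈ s, f i) :
    ∃ i ∈ s, ¬IsNowhereDense (f i) := by
  by_contra! hf
  exact hD.not_isNowhereDense ((hs.isNowhereDense_biUnion hf).mono hcover)

lemma Homeomorph.isNowhereDense_image {Y : Type*} [TopologicalSpace Y] (e : X ≃ₜ Y) {s : Set X} :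
    IsNowhereDense (e '' s) ↔ IsNowhereDense s := by
  rw [IsNowhereDense, IsNowhereDense, ← e.image_closure, ← e.image_interior, image_eq_empty]

end NowhereDense

lemma AddCircle.dense_range_nat_mul {p : ℝ} [Fact (0 < p)] {α : ℝ} (hα : Irrational (α / p)) :
    Dense (range fun n : ℕ => ((n * α : ℝ) : AddCircle p)) := by
  have hfun : (fun n : ℕ => ((n * α : ℝ) : AddCircle p)) = (· • (α : AddCircle p)) := by
    ext n
    rw [← nsmul_eq_mul, AddCircle.coe_nsmul]
  rw [hfun]
  exact denseRange_zsmul_iff_nsmul.mp (AddCircle.denseRange_zsmul_coe_iff.mpr hα)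

theorem stmt6 (α : ℝ) (hα : Irrational α) (X : Set (AddCircle (1 : ℝ)))
    (t : Finset (AddCircle (1 : ℝ)))
    (h : {x : AddCircle (1 : ℝ) | ∃ n : ℕ, x = ((n * α : ℝ) : AddCircle (1 : ℝ))} ⊆
      ⋃ c ∈ t, (fun x => x + c) '' X) :
    (interior (closure X)).Nonempty := by
  have horbit := AddCircle.dense_range_nat_mul (p := 1) (by rwa [div_one])
  obtain ⟨c, -, hc⟩ := horbit.exists_not_isNowhereDense_of_subset_biUnion t.finite_toSet
    fun _ ⟨n, hn⟩ => h ⟨n, hn.symm⟩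
  rw [show (fun x => x + c) '' X = Homeomorph.addRight c '' X from rfl,
    Homeomorph.isNowhereDense_image] at hc
  exact nonempty_iff_ne_empty.mpr hc
end

section
/- Let α_1, …, α_ℓ ∈ R with ℓ ≥ 2, and suppose dim_Q span_Q(1, α_1, …, α_ℓ) = 2 (i.e., r = 1). Let (x_n)_{n≥0} be an (α_1, …, α_ℓ)-orbit in T = R/Z taking infinitely many values. Then the closure K of {x_n : n ≥ 0} has non-empty interior in T. -/
/-!
Clearing denominators in a ℚ-basis `1, β` of the span gives an irrational `γ`, integers `aᵢ` and
`N > 0` such that `αᵢ - aᵢ γ` is `N`-torsion in `𝕋`. Hence `xₙ = x₀ + Aₙ γ + cₙ`, where `cₙ` ranges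
over the finite `N`-torsion and `Aₙ` is an integer walk with bounded steps `≤ M`, unbounded (say
above) because the orbit is infinite. Every integer `v ≥ A₀` then lies within `M` of some `Aₙ`, so
the forward multiples `m γ`, which are dense, are covered by finitely many translates of
`K = closure {xₙ}`. Being closed, these translates cover `𝕋`, and by Baire one of them has
non-empty interior.
-/

open Set

theorem Irrational.linearIndependent_one {β : ℝ} (hβ : Irrational β) :
    LinearIndependent ℚ ![(1 : ℝ), β] := by
  rw [LinearIndependent.pair_iff]
  intro s t hst
  by_cases ht : t = 0
  · subst ht
    simpa using hst
  · refine absurd ⟨-s / t, ?_⟩ hβ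
    rw [Rat.smul_def, Rat.smul_def] at hst
    push_cast
    field_simp
    linarith

theorem exists_irrational_forall_eq_mul_add_of_rank_span_eq_two {s : Set ℝ}
    (hs : Module.rank ℚ (Submodule.span ℚ (insert (1 : ℝ) s)) = 2) :
    ∃ β, Irrational β ∧ ∀ y ∈ s, ∃ p q : ℚ, y = p * β + q := by
  set V := Submodule.span ℚ (insert (1 : ℝ) s)
  obtain ⟨β, hβs, hβ⟩ : ∃ β ∈ s, Irrational β := by
    by_contra! hrat
    have hle : V ≤ Submodule.span ℚ {(1 : ℝ)} := by
      refine Submodule.span_le.mpr (insert_subset_iff.mpr ⟨Submodule.mem_span_singleton_self 1, ?_⟩)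
      intro y hy
      obtain ⟨q, rfl⟩ := not_not.mp (hrat y hy)
      exact Submodule.mem_span_singleton.mpr ⟨q, by simp [Rat.smul_def]⟩
    have := (Submodule.rank_mono hle).trans (rank_span_le _)
    simp [hs] at this
  have : FiniteDimensional ℚ V := Module.rank_lt_aleph0_iff.mp (by simp [hs])
  have hW : Submodule.span ℚ {(1 : ℝ), β} = V := by
    refine Submodule.eq_of_le_of_finrank_le
      (Submodule.span_mono (insert_subset_insert (singleton_subset_iff.mpr hβs))) ?_
    have := finrank_span_eq_card hβ.linearIndependent_one
    rw [Matrix.range_cons_cons_empty] at this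
    simp [this, Module.finrank_eq_of_rank_eq hs]
  refine ⟨β, hβ, fun y hy => ?_⟩
  have hyV : y ∈ V := Submodule.subset_span (mem_insert_of_mem _ hy)
  rw [← hW, Submodule.mem_span_pair] at hyV
  obtain ⟨q, p, rfl⟩ := hyV
  exact ⟨p, q, by simp [Rat.smul_def, add_comm]⟩

theorem Rat.exists_pos_nat_forall_mul_eq_intCast {ι : Type*} [Fintype ι] (p : ι → ℚ) :
    ∃ N : ℕ, 0 < N ∧ ∀ i, ∃ z : ℤ, (N : ℚ) * p i = z := by
  refine ⟨∏ i, (p i).den, Finset.prod_pos fun i _ => (p i).den_pos, fun i => ?_⟩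
  obtain ⟨m, hm⟩ := Finset.dvd_prod_of_mem (fun i => (p i).den) (Finset.mem_univ i)
  exact ⟨m * (p i).num, by
    rw [hm]; push_cast; rw [← Rat.mul_den_eq_num]; ring⟩

theorem AddCircle.exists_irrational_nsmul_sub_zsmul_eq_zero {ι : Type*} [Fintype ι] {α : ι → ℝ}
    {β : ℝ} (hβ : Irrational β) (hα : ∀ i, ∃ p q : ℚ, α i = p * β + q) :
    ∃ γ : ℝ, Irrational γ ∧ ∃ N : ℕ, 0 < N ∧ ∃ a : ι → ℤ,
      ∀ i, N • ((α i : AddCircle (1 : ℝ)) - a i • (γ : AddCircle (1 : ℝ))) = 0 := by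
  choose p q hα using hα
  obtain ⟨D, hD, hDp⟩ := Rat.exists_pos_nat_forall_mul_eq_intCast p
  obtain ⟨N, hN, hNq⟩ := Rat.exists_pos_nat_forall_mul_eq_intCast q
  choose a ha using hDp
  choose b hb using hNq
  refine ⟨β / D, hβ.div_natCast hD.ne', N, hN, a, fun i => ?_⟩
  have hint : (N : ℝ) * (α i - a i * (β / D)) = b i := by
    have hp : (a i : ℝ) = D * p i := by exact_mod_cast (ha i).symm
    have hq : (b i : ℝ) = N * q i := by exact_mod_cast (hb i).symm
    rw [hα i, hp, hq]
    field_simp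
    ring
  rw [← AddCircle.coe_zsmul, ← AddCircle.coe_sub, ← AddCircle.coe_nsmul, nsmul_eq_mul,
    zsmul_eq_mul, hint, AddCircle.coe_eq_zero_iff]
  exact ⟨b i, by simp⟩

theorem AddSubgroup.exists_sub_zsmul_mem_of_forall_sub_zsmul_mem {G ι : Type*} [AddCommGroup G]
    (H : AddSubgroup G) (g : G) (a : ι → ℤ) {x : ℕ → G}
    (hx : ∀ n, ∃ i, x (n + 1) - x n - a i • g ∈ H) :
    ∃ A : ℕ → ℤ, (∀ n, A (n + 1) - A n ∈ range a) ∧ ∀ n, x n - x 0 - A n • g ∈ H := by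
  choose i hi using hx
  refine ⟨fun n => ∑ k ∈ Finset.range n, a (i k),
    fun n => ⟨i n, by simp [Finset.sum_range_succ]⟩, fun n => ?_⟩
  induction n with
  | zero => simp
  | succ n ih =>
    convert H.add_mem ih (hi n) using 1
    simp only [Finset.sum_range_succ, add_zsmul]
    abel

theorem exists_apply_mem_Icc_of_abs_sub_le {A : ℕ → ℤ} {M : ℤ}
    (hstep : ∀ n, |A (n + 1) - A n| ≤ M) (hA : ¬BddAbove (range A)) {v : ℤ} (hv : A 0 ≤ v) :
    ∃ n, A n ∈ Icc v (v + M) := by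
  classical
  have hex : ∃ n, v ≤ A n := by
    by_contra! h
    exact hA ⟨v, forall_mem_range.mpr fun n => (h n).le⟩
  refine ⟨Nat.find hex, Nat.find_spec hex, ?_⟩
  have hfirst : ∀ k < Nat.find hex, A k < v := fun k hk => not_le.mp (Nat.find_min hex hk)
  rcases h : Nat.find hex with _ | k
  · have := (abs_nonneg _).trans (hstep 0)
    omega
  · have := hfirst k (by omega)
    have := (abs_le.mp (hstep k)).2
    omega

theorem interior_nonempty_of_forall_exists_zsmul_add_mem {G : Type*} [AddCommGroup G]
    [TopologicalSpace G] [IsTopologicalAddGroup G] [BaireSpace G] {g : G}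
    (hg : DenseRange (· • g : ℕ → G)) {K F : Set G} (hK : IsClosed K) (hF : F.Finite)
    {A : ℕ → ℤ} {M : ℤ} (hstep : ∀ n, |A (n + 1) - A n| ≤ M) (hA : ¬BddAbove (range A))
    (hmem : ∀ n, ∃ c ∈ F, A n • g + c ∈ K) : (interior K).Nonempty := by
  set T := image2 (fun k c => (A 0 + k) • g + c) (Icc 0 M) F
  have hT : T.Finite := (finite_Icc 0 M).image2 _ hF
  have hclosed : ∀ t ∈ T, IsClosed ((· + t) ⁻¹' K) := fun t _ =>
    hK.preimage (continuous_add_const t)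
  have hcover : ⋃ t ∈ T, (· + t) ⁻¹' K = univ := by
    refine eq_univ_of_univ_subset ?_
    rw [← hg.closure_range, (hT.isClosed_biUnion hclosed).closure_subset_iff]
    rintro _ ⟨m, rfl⟩
    obtain ⟨n, hn⟩ := exists_apply_mem_Icc_of_abs_sub_le hstep hA
      (le_add_of_nonneg_right m.cast_nonneg : A 0 ≤ A 0 + m)
    obtain ⟨c, hcF, hc⟩ := hmem n
    refine mem_iUnion₂.mpr ⟨_, mem_image2_of_mem (a := A n - A 0 - m) ⟨?_, ?_⟩ hcF, ?_⟩
    · linarith [hn.1]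
    · linarith [hn.2]
    · rw [mem_preimage]
      convert hc using 1
      simp only [sub_zsmul, add_zsmul, natCast_zsmul]
      abel
  obtain ⟨_, hz⟩ := (dense_biUnion_interior_of_closed hclosed hT.countable hcover).nonempty
  obtain ⟨t, -, hz⟩ := mem_iUnion₂.mp hz
  rw [← Homeomorph.coe_addRight, ← Homeomorph.preimage_interior] at hz
  exact ⟨_, hz⟩

theorem AddCircle.denseRange_nsmul_coe {γ : ℝ} (hγ : Irrational γ) :
    DenseRange (· • (γ : AddCircle (1 : ℝ)) : ℕ → AddCircle (1 : ℝ)) :=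
  denseRange_zsmul_iff_nsmul.mp (AddCircle.denseRange_zsmul_coe_iff.mpr (by simpa using hγ))

theorem AddCircle.interior_nonempty_of_forall_exists_zsmul_coe_add_mem {γ : ℝ} (hγ : Irrational γ)
    {K F : Set (AddCircle (1 : ℝ))} (hK : IsClosed K) (hF : F.Finite) {A : ℕ → ℤ} {M : ℤ}
    (hstep : ∀ n, |A (n + 1) - A n| ≤ M) (hA : (range A).Infinite)
    (hmem : ∀ n, ∃ c ∈ F, A n • (γ : AddCircle (1 : ℝ)) + c ∈ K) : (interior K).Nonempty := by
  by_cases hbdd : BddAbove (range A)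
  · have hbelow : ¬BddBelow (range A) := fun h => hA (h.finite_of_bddAbove hbdd)
    refine interior_nonempty_of_forall_exists_zsmul_add_mem (AddCircle.denseRange_nsmul_coe hγ.neg)
      hK hF (A := -A) (M := M) (fun n => ?_) ?_ fun n => ?_
    · simpa [abs_sub_comm, neg_add_eq_sub] using hstep n
    · rwa [← neg_range', bddAbove_neg]
    · simpa using hmem n
  · exact interior_nonempty_of_forall_exists_zsmul_add_mem (AddCircle.denseRange_nsmul_coe hγ)
      hK hF hstep hbdd hmem

theorem stmt11_general (ℓ : ℕ) (α : Fin ℓ → ℝ)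
    (hrank : Module.rank ℚ
      (Submodule.span ℚ (insert (1 : ℝ) (Set.range α)) : Submodule ℚ ℝ) = 2)
    (x : ℕ → AddCircle (1 : ℝ))
    (horbit : ∀ n : ℕ, ∃ i : Fin ℓ, x (n + 1) - x n = ((α i : ℝ) : AddCircle (1 : ℝ)))
    (hinf : (Set.range x).Infinite) :
    (interior (closure (Set.range x))).Nonempty := by
  obtain ⟨β, hβ, hαβ⟩ := exists_irrational_forall_eq_mul_add_of_rank_span_eq_two hrank
  obtain ⟨γ, hγ, N, hN, a, ha⟩ :=
    AddCircle.exists_irrational_nsmul_sub_zsmul_eq_zero hβ fun i => hαβ (α i) (mem_range_self i)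
  set H := (nsmulAddMonoidHom (α := AddCircle (1 : ℝ)) N).ker
  have hH : (H : Set (AddCircle (1 : ℝ))).Finite := AddCircle.finite_torsion 1 hN
  obtain ⟨A, hAstep, hxA⟩ := H.exists_sub_zsmul_mem_of_forall_sub_zsmul_mem γ a
    fun n => (horbit n).imp fun i hi => by rw [hi]; exact ha i
  obtain ⟨M, hM⟩ := Finite.bddAbove_range fun i => |a i|
  have hAinf : (range A).Infinite := fun hfin => hinf <|
    (hfin.image2 (fun k h => x 0 + k • (γ : AddCircle (1 : ℝ)) + h) hH).subset <| by
      rintro _ ⟨n, rfl⟩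
      exact ⟨A n, mem_range_self n, _, hxA n, by dsimp only; abel⟩
  refine AddCircle.interior_nonempty_of_forall_exists_zsmul_coe_add_mem hγ isClosed_closure
    (hH.image (x 0 + ·)) (M := M) (fun n => ?_) hAinf
    fun n => ⟨_, mem_image_of_mem _ (hxA n), subset_closure ⟨n, by abel⟩⟩
  obtain ⟨i, hi⟩ := hAstep n
  exact hi ▸ hM ⟨i, rfl⟩

theorem stmt11 (ℓ : ℕ) (hℓ : 2 ≤ ℓ) (α : Fin ℓ → ℝ)
    (hrank : Module.rank ℚ
      (Submodule.span ℚ (insert (1 : ℝ) (Set.range α)) : Submodule ℚ ℝ) = 2)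
    (x : ℕ → AddCircle (1 : ℝ))
    (horbit : ∀ n : ℕ, ∃ i : Fin ℓ, x (n + 1) - x n = ((α i : ℝ) : AddCircle (1 : ℝ)))
    (hinf : (Set.range x).Infinite) :
    (interior (closure (Set.range x))).Nonempty :=
  stmt11_general ℓ α hrank x horbit hinf
end
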